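/- arXiv:1702.05801 — 2 statements merged into one kernel-verified Lean document; each statement's English description precedes it below -/
import Mathlib

section
/- Let Ω ⊆ ℝ² be open and let U : Ω → ℝ³ be a C² map with |U(x)| = 1 for all x which satisfies the harmonic map equation ΔU + |∇U|² U = 0 in Ω. Define, for a C² map Φ : Ω → ℝ³, the projection Π_{U⊥}Φ = Φ − (Φ·U)U and the operator L_U[ψ] = Δψ + |∇U|² ψ + 2(∇U·∇ψ) U, where ∇U·∇ψ = Σ_{i=1}^{2} ∂_{x_i}U · ∂_{x_i}ψ. Then for every C² map Φ : Ω → ℝ³ one has, pointwise in Ω, L_U[Π_{U⊥}Φ] = Π_{U⊥}(ΔΦ) + |∇U|² Π_{U⊥}Φ − 2 Σ_{i=1}^{2} ∂_{x_i}(Φ·U) ∂_{x_i}U. -/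
/-
Write `c = Φ·U`, so that `Π_{U⊥}Φ = Φ - c U`. Both `c U` and `c = Φ·U` are bilinear expressions,
so their second derivatives follow from the Leibniz rule for bilinear maps. Differentiating
`|U|² = 1` gives `∂ᵢU·U = 0`, which removes the normal parts of `∇U·∇(Π_{U⊥}Φ)`, and the harmonic
map equation `ΔU = -|∇U|² U` turns `Δc` into `ΔΦ·U + 2 ∇Φ·∇U - |∇U|² c`; after these
substitutions all terms along `U` cancel.
-/

noncomputable section

open Real Set

abbrev R2 : Type := ℝ × ℝ
abbrev R3 : Type := ℝ × ℝ × ℝ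

/-- Euclidean inner product on `ℝ³`. -/
def dot3 (a b : R3) : ℝ := a.1 * b.1 + a.2.1 * b.2.1 + a.2.2 * b.2.2

/-- Partial derivative in the first variable. -/
def pd1 {E : Type*} [NormedAddCommGroup E] [NormedSpace ℝ E] (u : R2 → E) (x : R2) : E :=
  fderiv ℝ u x (1, 0)

/-- Partial derivative in the second variable. -/
def pd2 {E : Type*} [NormedAddCommGroup E] [NormedSpace ℝ E] (u : R2 → E) (x : R2) : E :=
  fderiv ℝ u x (0, 1)

/-- Componentwise Laplacian of a map `ℝ² → ℝ³`. -/
def lap3 (u : R2 → R3) (x : R2) : R3 := pd1 (pd1 u) x + pd2 (pd2 u) x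

/-- `|∇u|² = Σᵢ |∂_{xᵢ} u|²`. -/
def gradSq (u : R2 → R3) (x : R2) : ℝ :=
  dot3 (pd1 u x) (pd1 u x) + dot3 (pd2 u x) (pd2 u x)

/-- The projection onto the orthogonal complement of `U`: `Π_{U⊥}Φ = Φ − (Φ·U)U`. -/
def projPerp (U Φ : R2 → R3) (x : R2) : R3 := Φ x - dot3 (Φ x) (U x) • U x

/-- The linearized operator `L_U[ψ] = Δψ + |∇U|² ψ + 2(∇U·∇ψ) U`. -/
def LUop (U ψ : R2 → R3) (x : R2) : R3 :=
  lap3 ψ x + gradSq U x • ψ x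
    + (2 * (dot3 (pd1 U x) (pd1 ψ x) + dot3 (pd2 U x) (pd2 ψ x))) • U x

open Filter Topology

section SecondDerivatives

variable {E F G H : Type*} [NormedAddCommGroup E] [NormedSpace ℝ E]
  [NormedAddCommGroup F] [NormedSpace ℝ F] [NormedAddCommGroup G] [NormedSpace ℝ G]
  [NormedAddCommGroup H] [NormedSpace ℝ H] {x : E}

theorem ContDiffAt.differentiableAt_fderiv_apply {f : E → F} (hf : ContDiffAt ℝ 2 f x) (v : E) :
    DifferentiableAt ℝ (fun y => fderiv ℝ f y v) x :=
  ((hf.fderiv_right (m := 1) (by norm_num)).differentiableAt one_ne_zero).clm_apply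
    (differentiableAt_const v)

theorem ContDiffAt.eventually_differentiableAt {f : E → F} (hf : ContDiffAt ℝ 2 f x) :
    ∀ᶠ y in 𝓝 x, DifferentiableAt ℝ f y :=
  (hf.eventually (by simp)).mono fun _ hy => hy.differentiableAt two_ne_zero

theorem fderiv_fderiv_sub_apply {f g : E → F} (hf : ContDiffAt ℝ 2 f x)
    (hg : ContDiffAt ℝ 2 g x) (v w : E) :
    fderiv ℝ (fun y => fderiv ℝ (fun z => f z - g z) y v) x w
      = fderiv ℝ (fun y => fderiv ℝ f y v) x w - fderiv ℝ (fun y => fderiv ℝ g y v) x w := by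
  have hfirst : (fun y => fderiv ℝ (fun z => f z - g z) y v) =ᶠ[𝓝 x]
      fun y => fderiv ℝ f y v - fderiv ℝ g y v := by
    filter_upwards [hf.eventually_differentiableAt, hg.eventually_differentiableAt] with y hfy hgy
    rw [fderiv_fun_sub hfy hgy, sub_apply]
  rw [hfirst.fderiv_eq, fderiv_fun_sub (hf.differentiableAt_fderiv_apply v)
    (hg.differentiableAt_fderiv_apply v), sub_apply]

variable {f : E → F} {g : E → G} (B : F →L[ℝ] G →L[ℝ] H)

theorem fderiv_bilinear_apply (hf : DifferentiableAt ℝ f x) (hg : DifferentiableAt ℝ g x)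
    (v : E) :
    fderiv ℝ (fun y => B (f y) (g y)) x v
      = B (fderiv ℝ f x v) (g x) + B (f x) (fderiv ℝ g x v) := by
  rw [B.fderiv_of_bilinear hf hg]
  simp only [add_apply, ContinuousLinearMap.precompR_apply, ContinuousLinearMap.precompL_apply,
    ContinuousLinearMap.compL_apply, ContinuousLinearMap.comp_apply]
  exact add_comm _ _

theorem fderiv_fderiv_bilinear_apply (hf : ContDiffAt ℝ 2 f x) (hg : ContDiffAt ℝ 2 g x)
    (v w : E) :
    fderiv ℝ (fun y => fderiv ℝ (fun z => B (f z) (g z)) y v) x w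
      = B (fderiv ℝ (fun y => fderiv ℝ f y v) x w) (g x) + B (fderiv ℝ f x v) (fderiv ℝ g x w)
        + B (fderiv ℝ f x w) (fderiv ℝ g x v)
        + B (f x) (fderiv ℝ (fun y => fderiv ℝ g y v) x w) := by
  have hfirst : (fun y => fderiv ℝ (fun z => B (f z) (g z)) y v) =ᶠ[𝓝 x]
      fun y => B (fderiv ℝ f y v) (g y) + B (f y) (fderiv ℝ g y v) := by
    filter_upwards [hf.eventually_differentiableAt, hg.eventually_differentiableAt] with y hfy hgy
    exact fderiv_bilinear_apply B hfy hgy v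
  have hf1 := hf.differentiableAt two_ne_zero
  have hg1 := hg.differentiableAt two_ne_zero
  have hDf := hf.differentiableAt_fderiv_apply v
  have hDg := hg.differentiableAt_fderiv_apply v
  rw [hfirst.fderiv_eq, fderiv_fun_add (by fun_prop) (by fun_prop), add_apply,
    fderiv_bilinear_apply B hDf hg1, fderiv_bilinear_apply B hf1 hDg]
  abel

end SecondDerivatives

section InnerProduct

open ContinuousLinearMap in
def dot3L : R3 →L[ℝ] R3 →L[ℝ] ℝ :=
  (mul ℝ ℝ).bilinearComp (fst ℝ ℝ _) (fst ℝ ℝ _)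
    + (mul ℝ ℝ).bilinearComp ((fst ℝ ℝ ℝ).comp (snd ℝ ℝ _)) ((fst ℝ ℝ ℝ).comp (snd ℝ ℝ _))
    + (mul ℝ ℝ).bilinearComp ((snd ℝ ℝ ℝ).comp (snd ℝ ℝ _)) ((snd ℝ ℝ ℝ).comp (snd ℝ ℝ _))

theorem dot3L_apply (a b : R3) : dot3L a b = dot3 a b := rfl

theorem dot3_comm (a b : R3) : dot3 a b = dot3 b a := by
  simp only [dot3]; ring

theorem dot3_add_right (a b c : R3) : dot3 a (b + c) = dot3 a b + dot3 a c :=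
  map_add (dot3L a) b c

theorem dot3_sub_right (a b c : R3) : dot3 a (b - c) = dot3 a b - dot3 a c :=
  map_sub (dot3L a) b c

theorem dot3_smul_right (r : ℝ) (a b : R3) : dot3 a (r • b) = r * dot3 a b :=
  map_smul (dot3L a) r b

variable {E : Type*} [NormedAddCommGroup E] [NormedSpace ℝ E] {x : E}

theorem ContDiffAt.dot3 {n : WithTop ℕ∞} {f g : E → R3} (hf : ContDiffAt ℝ n f x)
    (hg : ContDiffAt ℝ n g x) : ContDiffAt ℝ n (fun y => dot3 (f y) (g y)) x :=
  dot3L.isBoundedBilinearMap.contDiff.comp_contDiffAt x (hf.prodMk hg)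

theorem DifferentiableAt.dot3 {f g : E → R3} (hf : DifferentiableAt ℝ f x)
    (hg : DifferentiableAt ℝ g x) : DifferentiableAt ℝ (fun y => dot3 (f y) (g y)) x :=
  (dot3L.isBoundedBilinearMap.differentiableAt _).comp x (hf.prodMk hg)

theorem dot3_fderiv_apply_self_eq_zero {U : E → R3} {r : ℝ} (hU : DifferentiableAt ℝ U x)
    (hconst : (fun y => dot3 (U y) (U y)) =ᶠ[𝓝 x] fun _ => r) (v : E) :
    dot3 (fderiv ℝ U x v) (U x) = 0 := by
  have h := fderiv_bilinear_apply dot3L hU hU v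
  simp only [dot3L_apply] at h
  rw [hconst.fderiv_eq, fderiv_const_apply, zero_apply, dot3_comm (U x)] at h
  linarith

end InnerProduct

section Laplacian

variable {F G H : Type*} [NormedAddCommGroup F] [NormedSpace ℝ F] [NormedAddCommGroup G]
  [NormedSpace ℝ G] [NormedAddCommGroup H] [NormedSpace ℝ H] {x : R2}

def lap (u : R2 → F) (x : R2) : F := pd1 (pd1 u) x + pd2 (pd2 u) x

theorem lap3_eq_lap (u : R2 → R3) (x : R2) : lap3 u x = lap u x := rfl

theorem lap_eq_fderiv_fderiv (u : R2 → F) (x : R2) :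
    lap u x = fderiv ℝ (fun y => fderiv ℝ u y (1, 0)) x (1, 0)
      + fderiv ℝ (fun y => fderiv ℝ u y (0, 1)) x (0, 1) := rfl

theorem lap_sub {f g : R2 → F} (hf : ContDiffAt ℝ 2 f x) (hg : ContDiffAt ℝ 2 g x) :
    lap (fun y => f y - g y) x = lap f x - lap g x := by
  simp only [lap_eq_fderiv_fderiv, fderiv_fderiv_sub_apply hf hg]
  abel

theorem lap_bilinear (B : F →L[ℝ] G →L[ℝ] H) {f : R2 → F} {g : R2 → G}
    (hf : ContDiffAt ℝ 2 f x) (hg : ContDiffAt ℝ 2 g x) :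
    lap (fun y => B (f y) (g y)) x = B (lap f x) (g x)
      + (2 : ℝ) • (B (pd1 f x) (pd1 g x) + B (pd2 f x) (pd2 g x)) + B (f x) (lap g x) := by
  simp only [lap_eq_fderiv_fderiv, pd1, pd2, fderiv_fderiv_bilinear_apply B hf hg, map_add,
    add_apply]
  module

theorem lap_dot3 {f g : R2 → R3} (hf : ContDiffAt ℝ 2 f x) (hg : ContDiffAt ℝ 2 g x) :
    lap (fun y => dot3 (f y) (g y)) x = dot3 (lap f x) (g x)
      + 2 * (dot3 (pd1 f x) (pd1 g x) + dot3 (pd2 f x) (pd2 g x)) + dot3 (f x) (lap g x) :=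
  lap_bilinear dot3L hf hg

theorem lap_smul {c : R2 → ℝ} {f : R2 → F} (hc : ContDiffAt ℝ 2 c x) (hf : ContDiffAt ℝ 2 f x) :
    lap (fun y => c y • f y) x = lap c x • f x
      + (2 : ℝ) • (pd1 c x • pd1 f x + pd2 c x • pd2 f x) + c x • lap f x :=
  lap_bilinear (ContinuousLinearMap.lsmul ℝ ℝ) hc hf

theorem fderiv_projPerp_apply {U Φ : R2 → R3} (hU : DifferentiableAt ℝ U x)
    (hΦ : DifferentiableAt ℝ Φ x) (v : R2) :
    fderiv ℝ (projPerp U Φ) x v = fderiv ℝ Φ x v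
      - (fderiv ℝ (fun y => dot3 (Φ y) (U y)) x v • U x
        + dot3 (Φ x) (U x) • fderiv ℝ U x v) := by
  have hc := hΦ.dot3 hU
  have hsmul := fderiv_bilinear_apply (ContinuousLinearMap.lsmul ℝ ℝ) hc hU v
  simp only [ContinuousLinearMap.lsmul_apply] at hsmul
  rw [← hsmul]
  exact congrArg (· v) (fderiv_fun_sub hΦ (hc.smul hU))

theorem lap_projPerp {U Φ : R2 → R3} (hU : ContDiffAt ℝ 2 U x) (hΦ : ContDiffAt ℝ 2 Φ x) :
    lap (projPerp U Φ) x = lap Φ x - lap (fun y => dot3 (Φ y) (U y)) x • U x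
      - (2 : ℝ) • (pd1 (fun y => dot3 (Φ y) (U y)) x • pd1 U x
        + pd2 (fun y => dot3 (Φ y) (U y)) x • pd2 U x) - dot3 (Φ x) (U x) • lap U x := by
  have hc := hΦ.dot3 hU
  change lap (fun y => Φ y - dot3 (Φ y) (U y) • U y) x = _
  rw [lap_sub (g := fun y => dot3 (Φ y) (U y) • U y) hΦ (hc.smul hU), lap_smul hc hU]
  abel

end Laplacian

/-- For a `C²` harmonic map `U` into the sphere and any `C²` map `Φ`,
`L_U[Π_{U⊥}Φ] = Π_{U⊥}(ΔΦ) + |∇U|² Π_{U⊥}Φ − 2 Σᵢ ∂_{xᵢ}(Φ·U) ∂_{xᵢ}U`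
pointwise in `Ω`. -/
theorem LU_of_projection (Ω : Set R2) (hΩ : IsOpen Ω) (U : R2 → R3)
    (hU : ContDiffOn ℝ 2 U Ω)
    (hUnorm : ∀ x ∈ Ω, dot3 (U x) (U x) = 1)
    (hUharm : ∀ x ∈ Ω, lap3 U x + gradSq U x • U x = 0)
    (Φ : R2 → R3) (hΦ : ContDiffOn ℝ 2 Φ Ω) :
    ∀ x ∈ Ω,
      LUop U (projPerp U Φ) x
        = (lap3 Φ x - dot3 (lap3 Φ x) (U x) • U x)
          + gradSq U x • projPerp U Φ x
          - (2 * pd1 (fun y => dot3 (Φ y) (U y)) x) • pd1 U x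
          - (2 * pd2 (fun y => dot3 (Φ y) (U y)) x) • pd2 U x := by
  intro x hx
  have hUx : ContDiffAt ℝ 2 U x := hU.contDiffAt (hΩ.mem_nhds hx)
  have hΦx : ContDiffAt ℝ 2 Φ x := hΦ.contDiffAt (hΩ.mem_nhds hx)
  have hperp : ∀ v, dot3 (fderiv ℝ U x v) (U x) = 0 :=
    dot3_fderiv_apply_self_eq_zero (hUx.differentiableAt two_ne_zero)
      (eventually_of_mem (hΩ.mem_nhds hx) hUnorm)
  have hlapU : lap U x = -gradSq U x • U x := by
    rw [neg_smul]; exact eq_neg_of_add_eq_zero_left (hUharm x hx)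
  have hpd :=
    fderiv_projPerp_apply (hUx.differentiableAt two_ne_zero) (hΦx.differentiableAt two_ne_zero)
  simp only [LUop, lap3_eq_lap]
  rw [lap_projPerp hUx hΦx, lap_dot3 hΦx hUx, hlapU]
  simp only [gradSq, pd1, pd2, hpd, projPerp, dot3_sub_right, dot3_add_right, dot3_smul_right,
    hperp, dot3_comm (fderiv ℝ Φ x _)]
  module
end
end

section
/- Let λ₀(t) = |log T| (T−t)/|log(T−t)|² for t < T, with T ∈ (0,1/2) sufficiently small. (a) For every a > 1 and b > 0 there is a constant C = C(a,b) such that for all t ∈ [0, T): ∫_{−T}^{t−λ₀(t)²} (t−s)^{−a} |log(T−s)|^{−b} ds ≤ C λ₀(t)^{2(1−a)} / |log(T−t)|^{b}. (b) For every μ ∈ (0,1) and l ∈ ℝ there is a constant C = C(μ,l) such that for all t ∈ [0, T): ∫_{−T}^{t−λ₀(t)²} (T−s)^{μ} (t−s)^{−2} |log(T−s)|^{−l} ds ≤ C (T−t)^{μ} / (λ₀(t)² |log(T−t)|^{l}). -/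
noncomputable section

open Real Set MeasureTheory

/-- The reference scaling parameter `λ₀(t) = |log T| (T−t)/|log(T−t)|²`. -/
def lam0 (T t : ℝ) : ℝ := |Real.log T| * (T - t) / (Real.log (T - t)) ^ 2

/-!
Substituting `u = t - s` turns both integrals into integrals over `u ∈ [ε, t + T]`, where
`ε = λ₀(t)²`, `x = T - t` and `T - s = u + x`. Since `ε ≤ x` and `|log ε| ≤ 6 |log x|`, the
weight `|log (u + x)|` is comparable to `|log u|` (up to a factor 12) on the whole range, and
`|log ε|` to `|log x|`. This reduces (a) to the model integral
`∫_ε u^{-a} |log u|^{-b} du ≲ ε^{1-a} |log ε|^{-b}`, and (b), via `(u + x)^μ ≤ u^μ + x^μ` and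
`ε^μ ≤ x^μ`, to the model integrals with `a = 2 - μ` and `a = 2`.
-/

theorem rpow_le_rpow_abs_mul_of_div_le_of_le_mul {y z c : ℝ} (r : ℝ) (hz : 0 < z) (hc : 1 ≤ c)
    (h₁ : z / c ≤ y) (h₂ : y ≤ c * z) : y ^ r ≤ c ^ |r| * z ^ r := by
  have hc₀ : 0 < c := by linarith
  have hy : 0 < y := (div_pos hz hc₀).trans_le h₁
  rcases le_or_gt 0 r with hr | hr
  · rw [abs_of_nonneg hr, ← mul_rpow hc₀.le hz.le]
    exact rpow_le_rpow hy.le h₂ hr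
  · calc y ^ r ≤ (z / c) ^ r := rpow_le_rpow_of_nonpos (by positivity) h₁ hr.le
      _ = c ^ |r| * z ^ r := by
        rw [abs_of_neg hr, div_rpow hz.le hc₀.le, rpow_neg hc₀.le]; field_simp

-- `9 > 12 log 2` absorbs the `log 2` lost in `log (u + x) ≤ log 2 + max (log u) (log x)`.
theorem neg_log_div_twelve_le_neg_log_add {u x : ℝ} (hu : 0 < u) (hx : 0 < x)
    (h9 : 9 ≤ -log u) (h6 : -log u ≤ 6 * -log x) : -log u / 12 ≤ -log (u + x) := by
  have hlog2 : log 2 < 0.6931471808 := log_two_lt_d9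
  rcases le_total u x with h | h
  · have : log (u + x) ≤ log 2 + log x := by
      rw [← log_mul two_ne_zero hx.ne']; exact log_le_log (by positivity) (by linarith)
    linarith
  · have : log (u + x) ≤ log 2 + log u := by
      rw [← log_mul two_ne_zero hu.ne']; exact log_le_log (by positivity) (by linarith)
    linarith

theorem abs_log_add_rpow_le {u x : ℝ} (r : ℝ) (hu : 0 < u) (hx : 0 < x) (hux : u + x ≤ 1)
    (h9 : 9 ≤ -log u) (h6 : -log u ≤ 6 * -log x) :
    |log (u + x)| ^ r ≤ 12 ^ |r| * |log u| ^ r := by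
  have hlow := neg_log_div_twelve_le_neg_log_add hu hx h9 h6
  have hup : -log (u + x) ≤ -log u := neg_le_neg (log_le_log hu (by linarith))
  rw [abs_of_nonpos (log_nonpos (by linarith) hux), abs_of_nonpos (by linarith : log u ≤ 0)]
  exact rpow_le_rpow_abs_mul_of_div_le_of_le_mul r (by linarith) (by norm_num) hlow
    (by linarith)

theorem continuousOn_rpow_mul_abs_log_add_rpow {ε A x : ℝ} (a b : ℝ) (hε : 0 < ε) (hx : 0 ≤ x)
    (hAx : A + x < 1) : ContinuousOn (fun u => u ^ (-a) * |log (u + x)| ^ (-b)) (Icc ε A) := by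
  intro u hu
  have hu₀ : 0 < u := hε.trans_le hu.1
  have hux : u + x ≠ 0 := by linarith
  have hpow : u ≠ 0 ∨ 0 ≤ -a := Or.inl hu₀.ne'
  have hlog : |log (u + x)| ≠ 0 ∨ 0 ≤ -b :=
    Or.inl (abs_ne_zero.mpr (log_neg (by linarith) (by linarith [hu.2])).ne)
  exact ContinuousAt.continuousWithinAt (by fun_prop (disch := assumption))

theorem continuousOn_rpow_mul_abs_log_rpow {ε A : ℝ} (a b : ℝ) (hε : 0 < ε) (hA : A < 1) :
    ContinuousOn (fun u => u ^ (-a) * |log u| ^ (-b)) (Icc ε A) := by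
  simpa using continuousOn_rpow_mul_abs_log_add_rpow a b hε le_rfl (by simpa using hA)

theorem hasDerivAt_neg_rpow_mul_neg_log_rpow {u : ℝ} (a b : ℝ) (hu₀ : 0 < u) (hu₁ : u < 1) :
    HasDerivAt (fun u => -(u ^ (1 - a) * (-log u) ^ (-b)))
      (u ^ (-a) * (-log u) ^ (-b) * (a - 1 - b / -log u)) u := by
  have hL : 0 < -log u := neg_pos.mpr (log_neg hu₀ hu₁)
  have hpow := hasDerivAt_rpow_const (p := 1 - a) (Or.inl hu₀.ne')
  have hlog := ((hasDerivAt_log hu₀.ne').neg).rpow_const (p := -b) (Or.inl hL.ne')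
  refine ((hpow.mul hlog).neg).congr_deriv ?_
  simp only [Pi.neg_apply]
  rw [show 1 - a - 1 = -a by ring, show -b - 1 = -b + -1 by ring, rpow_add hL, rpow_neg_one,
    show -a = (1 - a) + -1 by ring, rpow_add hu₀, rpow_neg_one]
  field_simp
  ring

theorem integral_rpow_mul_abs_log_rpow_le {a b ε A : ℝ} (ha : 1 < a) (hε : 0 < ε) (hεA : ε ≤ A)
    (hA : A < 1) (hab : 2 * b ≤ (a - 1) * -log A) :
    ∫ u in ε..A, u ^ (-a) * |log u| ^ (-b) ≤ 2 / (a - 1) * (ε ^ (1 - a) * |log ε| ^ (-b)) := by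
  have ha₁ : 0 < a - 1 := by linarith
  have hderiv : ∀ u ∈ Icc ε A, HasDerivAt (fun u => -(u ^ (1 - a) * (-log u) ^ (-b)))
      (u ^ (-a) * (-log u) ^ (-b) * (a - 1 - b / -log u)) u := fun u hu =>
    hasDerivAt_neg_rpow_mul_neg_log_rpow a b (hε.trans_le hu.1) (hu.2.trans_lt hA)
  -- Once `2 b ≤ (a - 1) |log u|`, the derivative of `-u^{1-a} |log u|^{-b}` is at least
  -- `(a - 1) / 2` times the integrand.
  have hFTC : ∫ u in ε..A, (a - 1) / 2 * (u ^ (-a) * |log u| ^ (-b))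
      ≤ -(A ^ (1 - a) * (-log A) ^ (-b)) - -(ε ^ (1 - a) * (-log ε) ^ (-b)) := by
    refine intervalIntegral.integral_le_sub_of_hasDeriv_right_of_le hεA
      (fun u hu => (hderiv u hu).continuousAt.continuousWithinAt)
      (fun u hu => (hderiv u (Ioo_subset_Icc_self hu)).hasDerivWithinAt)
      ((continuousOn_rpow_mul_abs_log_rpow a b hε hA).integrableOn_Icc.const_mul _) fun u hu => ?_
    have hu₀ : 0 < u := hε.trans hu.1
    have hL : -log A ≤ -log u := neg_le_neg (log_le_log hu₀ hu.2.le)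
    have hA₀ : 0 < -log A := neg_pos.mpr (log_neg (hε.trans_le hεA) hA)
    rw [abs_of_neg (log_neg hu₀ (hu.2.trans hA))]
    have hP : 0 < u ^ (-a) * (-log u) ^ (-b) :=
      mul_pos (rpow_pos_of_pos hu₀ _) (rpow_pos_of_pos (hA₀.trans_le hL) _)
    have : b / -log u ≤ (a - 1) / 2 := by
      rw [div_le_div_iff₀ (hA₀.trans_le hL) two_pos]
      nlinarith
    nlinarith
  have hA₀ : 0 ≤ A ^ (1 - a) * (-log A) ^ (-b) :=
    mul_nonneg (rpow_nonneg (hε.le.trans hεA) _)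
      (rpow_nonneg (neg_nonneg.mpr (log_nonpos (hε.le.trans hεA) hA.le)) _)
  rw [intervalIntegral.integral_const_mul] at hFTC
  rw [abs_of_neg (log_neg hε (hεA.trans_lt hA)), div_mul_eq_mul_div, le_div_iff₀ ha₁]
  linarith

theorem integral_rpow_mul_abs_log_add_rpow_le {a b x ε A : ℝ} (ha : 1 < a) (hε : 0 < ε)
    (hεx : ε ≤ x) (hεA : ε ≤ A) (hAx : A + x < 1) (h9 : 9 ≤ -log A)
    (hab : 2 * b ≤ (a - 1) * -log A) (h6 : -log ε ≤ 6 * -log x) :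
    ∫ u in ε..A, u ^ (-a) * |log (u + x)| ^ (-b)
      ≤ 12 ^ |b| * 6 ^ |b| * (2 / (a - 1)) * ε ^ (1 - a) / |log x| ^ b := by
  have hx : 0 < x := hε.trans_le hεx
  have hA : A < 1 := by linarith
  have hcomp : ∀ u ∈ Icc ε A,
      u ^ (-a) * |log (u + x)| ^ (-b) ≤ 12 ^ |b| * (u ^ (-a) * |log u| ^ (-b)) := by
    intro u hu
    have hu₀ : 0 < u := hε.trans_le hu.1
    rw [mul_left_comm]
    refine mul_le_mul_of_nonneg_left ?_ (rpow_nonneg hu₀.le _)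
    simpa using abs_log_add_rpow_le (-b) hu₀ hx (by linarith [hu.2])
      (h9.trans (neg_le_neg (log_le_log hu₀ hu.2)))
      ((neg_le_neg (log_le_log hε hu.1)).trans h6)
  have hlogε : |log ε| ^ (-b) ≤ 6 ^ |b| * |log x| ^ (-b) := by
    have hlx : log x < 0 := log_neg hx (by linarith)
    have hεx' : -log x ≤ -log ε := neg_le_neg (log_le_log hε hεx)
    rw [abs_of_neg hlx, abs_of_neg (by linarith : log ε < 0)]
    simpa using rpow_le_rpow_abs_mul_of_div_le_of_le_mul (-b) (neg_pos.mpr hlx) (by norm_num)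
      (by linarith) h6
  calc ∫ u in ε..A, u ^ (-a) * |log (u + x)| ^ (-b)
      ≤ ∫ u in ε..A, 12 ^ |b| * (u ^ (-a) * |log u| ^ (-b)) :=
        intervalIntegral.integral_mono_on hεA
          ((continuousOn_rpow_mul_abs_log_add_rpow a b hε hx.le hAx).intervalIntegrable_of_Icc hεA)
          (((continuousOn_rpow_mul_abs_log_rpow a b hε hA).intervalIntegrable_of_Icc
            hεA).const_mul _)
          hcomp
    _ = 12 ^ |b| * ∫ u in ε..A, u ^ (-a) * |log u| ^ (-b) := intervalIntegral.integral_const_mul _ _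
    _ ≤ 12 ^ |b| * (2 / (a - 1) * (ε ^ (1 - a) * |log ε| ^ (-b))) := by
        gcongr; exact integral_rpow_mul_abs_log_rpow_le ha hε hεA hA hab
    _ ≤ 12 ^ |b| * (2 / (a - 1) * (ε ^ (1 - a) * (6 ^ |b| * |log x| ^ (-b)))) := by
        have : 0 < a - 1 := by linarith
        gcongr
    _ = 12 ^ |b| * 6 ^ |b| * (2 / (a - 1)) * ε ^ (1 - a) / |log x| ^ b := by
        rw [rpow_neg (abs_nonneg _)]; ring

theorem integral_rpow_add_mul_rpow_mul_abs_log_add_rpow_le {μ l x ε A : ℝ} (hμ₀ : 0 < μ)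
    (hμ₁ : μ < 1) (hε : 0 < ε) (hεx : ε ≤ x) (hεA : ε ≤ A) (hAx : A + x < 1)
    (h9 : 9 ≤ -log A) (hl : 2 * l ≤ (1 - μ) * -log A) (h6 : -log ε ≤ 6 * -log x) :
    ∫ u in ε..A, (u + x) ^ μ * u ^ (-(2 : ℝ)) * |log (u + x)| ^ (-l)
      ≤ 12 ^ |l| * 6 ^ |l| * (2 / (1 - μ) + 2) * x ^ μ / (ε * |log x| ^ l) := by
  have hx : 0 < x := hε.trans_le hεx
  set C : ℝ := 12 ^ |l| * 6 ^ |l|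
  have hI₁ := integral_rpow_mul_abs_log_add_rpow_le (a := 2 - μ) (b := l) (by linarith) hε hεx
    hεA hAx h9 (by linarith) h6
  have hI₂ := integral_rpow_mul_abs_log_add_rpow_le (a := 2) (b := l) one_lt_two hε hεx
    hεA hAx h9 (by nlinarith) h6
  have hint : ∀ a : ℝ, IntervalIntegrable (fun u => u ^ (-a) * |log (u + x)| ^ (-l)) volume ε A :=
    fun a => (continuousOn_rpow_mul_abs_log_add_rpow a l hε hx.le hAx).intervalIntegrable_of_Icc hεA
  have hsplit : ∀ u ∈ Icc ε A, (u + x) ^ μ * u ^ (-(2 : ℝ)) * |log (u + x)| ^ (-l)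
      ≤ u ^ (-(2 - μ)) * |log (u + x)| ^ (-l)
        + x ^ μ * (u ^ (-(2 : ℝ)) * |log (u + x)| ^ (-l)) := by
    intro u hu
    have hu₀ : 0 < u := hε.trans_le hu.1
    have hpow : u ^ (-(2 - μ)) = u ^ μ * u ^ (-(2 : ℝ)) := by
      rw [← rpow_add hu₀]; ring_nf
    rw [hpow]
    have := rpow_add_le_add_rpow hu₀.le hx.le hμ₀.le hμ₁.le
    have : 0 ≤ u ^ (-(2 : ℝ)) * |log (u + x)| ^ (-l) := by positivity
    nlinarith
  have hεμ : ε ^ (μ - 1) ≤ x ^ μ * ε ^ (-1 : ℝ) := by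
    rw [sub_eq_add_neg, rpow_add hε]
    gcongr
  calc ∫ u in ε..A, (u + x) ^ μ * u ^ (-(2 : ℝ)) * |log (u + x)| ^ (-l)
      ≤ ∫ u in ε..A, (u ^ (-(2 - μ)) * |log (u + x)| ^ (-l)
          + x ^ μ * (u ^ (-(2 : ℝ)) * |log (u + x)| ^ (-l))) := by
        refine intervalIntegral.integral_mono_on hεA ?_ ((hint _).add ((hint 2).const_mul _))
          hsplit
        simpa only [mul_assoc, Pi.mul_def] using
          (((continuous_add_const x).rpow_const fun _ => Or.inr hμ₀.le).continuousOn.mul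
            (continuousOn_rpow_mul_abs_log_add_rpow 2 l hε hx.le hAx)).intervalIntegrable_of_Icc hεA
    _ = (∫ u in ε..A, u ^ (-(2 - μ)) * |log (u + x)| ^ (-l))
          + x ^ μ * ∫ u in ε..A, u ^ (-(2 : ℝ)) * |log (u + x)| ^ (-l) := by
        rw [intervalIntegral.integral_add (hint _) ((hint 2).const_mul _),
          intervalIntegral.integral_const_mul]
    _ ≤ C * (2 / (2 - μ - 1)) * ε ^ (1 - (2 - μ)) / |log x| ^ l
          + x ^ μ * (C * (2 / (2 - 1)) * ε ^ (1 - 2 : ℝ) / |log x| ^ l) := by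
        gcongr
    _ ≤ C * (2 / (1 - μ)) * (x ^ μ * ε ^ (-1 : ℝ)) / |log x| ^ l
          + x ^ μ * (C * 2 * ε ^ (-1 : ℝ) / |log x| ^ l) := by
        rw [show 2 - μ - 1 = 1 - μ by ring, show 1 - (2 - μ) = μ - 1 by ring]
        norm_num
        gcongr
    _ = C * (2 / (1 - μ) + 2) * x ^ μ / (ε * |log x| ^ l) := by
        rw [rpow_neg_one]; field_simp

section lam0

variable {T t : ℝ}

theorem lam0_eq_neg_log (hT : 0 < T) (hT₁ : T < 1) :
    lam0 T t = -log T * (T - t) / (-log (T - t)) ^ 2 := by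
  rw [lam0, abs_of_neg (log_neg hT hT₁), neg_sq]

theorem lam0_nonneg (htT : t ≤ T) : 0 ≤ lam0 T t :=
  div_nonneg (mul_nonneg (abs_nonneg _) (sub_nonneg.mpr htT)) (sq_nonneg _)

theorem one_le_neg_log_and_neg_log_le_neg_log_sub (hT : 0 < T) (hTe : T ≤ exp (-1)) (ht : 0 ≤ t)
    (htT : t < T) :
    1 ≤ -log T ∧ -log T ≤ -log (T - t) := by
  have h₁ : log T ≤ -1 := by simpa using log_le_log hT hTe
  exact ⟨by linarith, neg_le_neg (log_le_log (by linarith) (by linarith))⟩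

theorem lam0_pos (hT : 0 < T) (hTe : T ≤ exp (-1)) (ht : 0 ≤ t) (htT : t < T) :
    0 < lam0 T t := by
  obtain ⟨h₁, h₂⟩ := one_le_neg_log_and_neg_log_le_neg_log_sub hT hTe ht htT
  rw [lam0_eq_neg_log hT (by linarith [exp_neg_one_lt_half])]
  have : 0 < T - t := by linarith
  have : 0 < -log (T - t) := by linarith
  positivity

theorem lam0_le_sub (hT : 0 < T) (hTe : T ≤ exp (-1)) (ht : 0 ≤ t) (htT : t < T) :
    lam0 T t ≤ T - t := by
  obtain ⟨h₁, h₂⟩ := one_le_neg_log_and_neg_log_le_neg_log_sub hT hTe ht htT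
  have hx : 0 < T - t := by linarith
  rw [lam0_eq_neg_log hT (by linarith [exp_neg_one_lt_half]),
    div_le_iff₀ (pow_pos (by linarith) 2)]
  have : -log T ≤ (-log (T - t)) ^ 2 := by nlinarith
  nlinarith

theorem neg_log_lam0_sq_le (hT : 0 < T) (hTe : T ≤ exp (-1)) (ht : 0 ≤ t) (htT : t < T) :
    -log (lam0 T t ^ 2) ≤ 6 * -log (T - t) := by
  obtain ⟨h₁, h₂⟩ := one_le_neg_log_and_neg_log_le_neg_log_sub hT hTe ht htT
  have hx : 0 < T - t := by linarith
  have hL : 0 < -log (T - t) := by linarith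
  rw [log_pow, lam0_eq_neg_log hT (by linarith [exp_neg_one_lt_half]),
    log_div (by positivity) (by positivity), log_mul (by positivity) hx.ne', log_pow]
  have := log_le_sub_one_of_pos hL
  have := log_nonneg h₁
  push_cast
  linarith

end lam0

theorem lam0_window {b c T t : ℝ} (hc : 0 < c) (hT : 0 < T)
    (hTK : T < exp (-(9 + 2 * |b| / c)) / 2) (ht : 0 ≤ t) (htT : t < T) :
    0 < lam0 T t ^ 2 ∧ lam0 T t ^ 2 ≤ T - t ∧ lam0 T t ^ 2 ≤ t + T ∧ t + T + (T - t) < 1 ∧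
      9 ≤ -log (t + T) ∧ 2 * b ≤ c * -log (t + T) ∧
      -log (lam0 T t ^ 2) ≤ 6 * -log (T - t) := by
  have hbc : 0 ≤ 2 * |b| / c := by positivity
  have hK : exp (-(9 + 2 * |b| / c)) ≤ exp (-1) := exp_le_exp.mpr (by linarith)
  have hTe : T ≤ exp (-1) := by linarith [exp_pos (-(9 + 2 * |b| / c))]
  have hlam₀ := lam0_pos hT hTe ht htT
  have hlamx := lam0_le_sub hT hTe ht htT
  have hlam₁ : lam0 T t < 1 := by linarith [exp_neg_one_lt_half]
  have hlogA : 9 + 2 * |b| / c ≤ -log (t + T) := by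
    have := log_le_log (by linarith) (by linarith : t + T ≤ exp (-(9 + 2 * |b| / c)))
    rw [log_exp] at this
    linarith
  refine ⟨by positivity, by nlinarith, by nlinarith, by linarith [exp_neg_one_lt_half], by linarith,
    ?_, neg_log_lam0_sq_le hT hTe ht htT⟩
  calc 2 * b ≤ c * (2 * |b| / c) := by rw [mul_div_cancel₀ _ hc.ne']; linarith [le_abs_self b]
    _ ≤ c * -log (t + T) := by gcongr; linarith

theorem integral_sub_eq_integral_shift (f : ℝ → ℝ → ℝ) (T t ε : ℝ) :
    ∫ s in (-T)..(t - ε), f (t - s) (T - s) = ∫ u in ε..(t + T), f u (u + (T - t)) := by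
  simpa only [sub_sub_cancel, sub_neg_eq_add, sub_add_sub_cancel'] using
    intervalIntegral.integral_comp_sub_left (fun u => f u (u + (T - t))) (a := -T) (b := t - ε) t

/-- Integral estimates for the kernels appearing in the nonlocal `λ`–`α` system:
(a) for `a > 1`, `b > 0`, `∫_{−T}^{t−λ₀(t)²} (t−s)^{−a} |log(T−s)|^{−b} ds
 ≤ C λ₀(t)^{2(1−a)} / |log(T−t)|^{b}`;
(b) for `μ ∈ (0,1)`, `l ∈ ℝ`, `∫_{−T}^{t−λ₀(t)²} (T−s)^{μ} (t−s)^{−2} |log(T−s)|^{−l} ds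
 ≤ C (T−t)^{μ} / (λ₀(t)² |log(T−t)|^{l})`,
for all `0 ≤ t < T` with `T ∈ (0,1/2)` sufficiently small. -/
theorem lam0_kernel_integral_estimates :
    (∀ a b : ℝ, 1 < a → 0 < b → ∃ C > 0, ∃ T₀ > 0, T₀ ≤ 1 / 2 ∧
      ∀ T, 0 < T → T < T₀ → ∀ t, 0 ≤ t → t < T →
        (∫ s in (-T)..(t - lam0 T t ^ 2), (t - s) ^ (-a) * |Real.log (T - s)| ^ (-b))
          ≤ C * lam0 T t ^ (2 * (1 - a)) / |Real.log (T - t)| ^ b) ∧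
    (∀ μ l : ℝ, 0 < μ → μ < 1 → ∃ C > 0, ∃ T₀ > 0, T₀ ≤ 1 / 2 ∧
      ∀ T, 0 < T → T < T₀ → ∀ t, 0 ≤ t → t < T →
        (∫ s in (-T)..(t - lam0 T t ^ 2),
            (T - s) ^ μ * (t - s) ^ (-(2 : ℝ)) * |Real.log (T - s)| ^ (-l))
          ≤ C * (T - t) ^ μ / (lam0 T t ^ 2 * |Real.log (T - t)| ^ l)) := by
  have hT₀ : ∀ K : ℝ, 0 ≤ K → exp (-K) / 2 ≤ 1 / 2 := fun K hK => by
    gcongr; exact exp_le_one_iff.mpr (by linarith)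
  refine ⟨fun a b ha _ => ?_, fun μ l hμ₀ hμ₁ => ?_⟩
  · have ha₁ : 0 < a - 1 := by linarith
    refine ⟨12 ^ |b| * 6 ^ |b| * (2 / (a - 1)), by positivity,
      exp (-(9 + 2 * |b| / (a - 1))) / 2, by positivity, hT₀ _ (by positivity),
      fun T hT hTT₀ t ht htT => ?_⟩
    obtain ⟨hε, hεx, hεA, hAx, h9, hab, h6⟩ := lam0_window ha₁ hT hTT₀ ht htT
    calc _ = ∫ u in lam0 T t ^ 2..(t + T), u ^ (-a) * |log (u + (T - t))| ^ (-b) :=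
          integral_sub_eq_integral_shift (fun u v => u ^ (-a) * |log v| ^ (-b)) T t _
      _ ≤ _ := integral_rpow_mul_abs_log_add_rpow_le ha hε hεx hεA hAx h9 hab h6
      _ = _ := by rw [rpow_mul (lam0_nonneg htT.le), rpow_two]
  · have hμ : 0 < 1 - μ := by linarith
    refine ⟨12 ^ |l| * 6 ^ |l| * (2 / (1 - μ) + 2), by positivity,
      exp (-(9 + 2 * |l| / (1 - μ))) / 2, by positivity, hT₀ _ (by positivity),
      fun T hT hTT₀ t ht htT => ?_⟩
    obtain ⟨hε, hεx, hεA, hAx, h9, hl, h6⟩ := lam0_window hμ hT hTT₀ ht htT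
    calc _ = ∫ u in lam0 T t ^ 2..(t + T),
          (u + (T - t)) ^ μ * u ^ (-(2 : ℝ)) * |log (u + (T - t))| ^ (-l) :=
          integral_sub_eq_integral_shift (fun u v => v ^ μ * u ^ (-(2 : ℝ)) * |log v| ^ (-l)) T t _
      _ ≤ _ := integral_rpow_add_mul_rpow_mul_abs_log_add_rpow_le hμ₀ hμ₁ hε hεx hεA hAx h9 hl h6
end
end
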